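/- One has h ∈ 𝔰_0 and y ∈ 𝔰_1; if moreover the restriction of the Killing form of 𝔤 to 𝔰 is nondegenerate, then 𝔰_1 = K·y, 𝔰_i = 0 for all i ≥ 2, and K·y is a Lie ideal of the subalgebra 𝔰^{(0)} = 𝔰_0 + 𝔰_1. -/

import Mathlib

/-- `sAux 0 = 𝔰_{-1} = K·x`, `sAux (n+1) = 𝔰_n = {u ∈ 𝔤_n : ⁅x,u⁆ ∈ 𝔰_{n-1}}`. -/
noncomputable def sAux {K L : Type*} [Field K] [LieRing L] [LieAlgebra K L]
    (g : ℤ → Submodule K L) (x : L) : ℕ → Submodule K L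
  | 0 => Submodule.span K {x}
  | (n + 1) => g (n : ℤ) ⊓ (sAux g x n).comap (LieAlgebra.ad K L x)

/-- The subspaces `𝔰_i ⊆ 𝔤_i`. -/
noncomputable def sFun {K L : Type*} [Field K] [LieRing L] [LieAlgebra K L]
    (g : ℤ → Submodule K L) (x : L) (i : ℤ) : Submodule K L :=
  if i < -1 then ⊥ else sAux g x (i + 1).toNat

/-!
`⁅x, h⁆ = 2x` and `⁅x, y⁆ = -h` put `h` in `𝔰_0` and `y` in `𝔰_1`. Since `ad x` maps `𝔰_i`
into `𝔰_{i-1}`, the Leibniz rule gives `⁅𝔰_i, 𝔰_j⁆ ⊆ 𝔰_{i+j}` by induction on `i + j`, which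
reduces the ideal property to `𝔰_2 = 0`.
The Killing form pairs `𝔤_i` with `𝔤_j` trivially unless `i + j = 0`, so an element of `𝔰_i`
with `i ≥ 1` is Killing-orthogonal to all of `𝔰` as soon as it is orthogonal to `x`. Under
nondegeneracy this kills `𝔰_i` for `i ≥ 2` and makes `u ↦ κ(u, x)` injective on `𝔰_1`,
which therefore is the line `K·y`.
-/

open Submodule

theorem Submodule.eq_span_singleton_of_disjoint_ker {K V : Type*} [Field K] [AddCommGroup V]
    [Module K V] {S : Submodule K V} {f : V →ₗ[K] K} (hS : Disjoint S (LinearMap.ker f))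
    {y : V} (hy : y ∈ S) (hfy : f y ≠ 0) : S = K ∙ y := by
  refine le_antisymm (fun u hu => ?_) ((span_singleton_le_iff_mem y S).2 hy)
  have hker : u - (f u / f y) • y = 0 :=
    disjoint_def.1 hS _ (sub_mem hu (smul_mem _ _ hy)) (by simp [hfy])
  rw [sub_eq_zero.1 hker]
  exact smul_mem _ _ (mem_span_singleton_self y)

section Grading

variable {K L : Type*} [Field K] [LieRing L] [LieAlgebra K L]

theorem killingForm_eq_zero_of_mem_of_add_ne_zero [FiniteDimensional K L] {ι : Type*}
    [AddCancelCommMonoid ι] [DecidableEq ι] {g : ι → Submodule K L}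
    (hg : DirectSum.IsInternal g) (hbr : ∀ i j : ι, ∀ u ∈ g i, ∀ v ∈ g j, ⁅u, v⁆ ∈ g (i + j))
    {i j : ι} (hij : i + j ≠ 0) {u v : L} (hu : u ∈ g i) (hv : v ∈ g j) :
    killingForm K L u v = 0 := by
  rw [killingForm_apply_apply]
  refine LinearMap.trace_eq_zero_of_mapsTo_ne hg (· + (i + j))
    (fun k hk => hij (add_eq_left.1 hk)) fun k w hw => ?_
  have hvw := hbr i _ u hu _ (hbr j k v hv w hw)
  rwa [← add_assoc, add_comm (i + j)] at hvw

variable {g : ℤ → Submodule K L} {x : L}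

theorem sFun_of_lt_neg_one {i : ℤ} (hi : i < -1) : sFun g x i = ⊥ := by
  simp [sFun, hi]

theorem sFun_neg_one : sFun g x (-1) = K ∙ x := by
  simp [sFun, sAux]

theorem mem_sFun_iff {i : ℤ} (hi : 0 ≤ i) {u : L} :
    u ∈ sFun g x i ↔ u ∈ g i ∧ ⁅x, u⁆ ∈ sFun g x (i - 1) := by
  obtain ⟨n, rfl⟩ := Int.eq_ofNat_of_zero_le hi
  have hsucc : ((n : ℤ) + 1).toNat = n + 1 := by omega
  have hpred : ((n : ℤ) - 1 + 1).toNat = n := by omega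
  rw [sFun, sFun, if_neg (by omega), if_neg (by omega), hsucc, hpred, sAux]
  rfl

theorem sFun_le (hx : x ∈ g (-1)) (i : ℤ) : sFun g x i ≤ g i := by
  rcases lt_trichotomy i (-1) with hi | rfl | hi
  · simp [sFun_of_lt_neg_one hi]
  · rwa [sFun_neg_one, span_singleton_le_iff_mem]
  · exact fun u hu => ((mem_sFun_iff (by omega)).1 hu).1

theorem lie_mem_sFun_sub_one {i : ℤ} (hi : -1 ≤ i) {u : L} (hu : u ∈ sFun g x i) :
    ⁅x, u⁆ ∈ sFun g x (i - 1) := by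
  rcases hi.eq_or_lt with rfl | hi
  · obtain ⟨c, rfl⟩ := mem_span_singleton.1 (sFun_neg_one (g := g) ▸ hu)
    simp
  · exact ((mem_sFun_iff (by omega)).1 hu).2

theorem lie_mem_sFun (hbr : ∀ i j : ℤ, ∀ u ∈ g i, ∀ v ∈ g j, ⁅u, v⁆ ∈ g (i + j))
    {i j : ℤ} (hi : -1 ≤ i) (hj : -1 ≤ j) {u v : L} (hu : u ∈ sFun g x i)
    (hv : v ∈ sFun g x j) : ⁅u, v⁆ ∈ sFun g x (i + j) := by
  rcases hi.eq_or_lt with rfl | hi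
  · obtain ⟨c, rfl⟩ := mem_span_singleton.1 (sFun_neg_one (g := g) ▸ hu)
    rw [smul_lie, neg_add_eq_sub]
    exact smul_mem _ _ (lie_mem_sFun_sub_one hj hv)
  rcases hj.eq_or_lt with rfl | hj
  · obtain ⟨c, rfl⟩ := mem_span_singleton.1 (sFun_neg_one (g := g) ▸ hv)
    rw [lie_smul, ← lie_skew, ← sub_eq_add_neg]
    exact smul_mem _ _ (neg_mem (lie_mem_sFun_sub_one hi.le hu))
  obtain ⟨hu₀, hu₁⟩ := (mem_sFun_iff (by omega)).1 hu
  obtain ⟨hv₀, hv₁⟩ := (mem_sFun_iff (by omega)).1 hv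
  refine (mem_sFun_iff (by omega)).2 ⟨hbr i j u hu₀ v hv₀, ?_⟩
  rw [leibniz_lie]
  have hxu := lie_mem_sFun hbr (by omega) hj.le hu₁ hv
  have hxv := lie_mem_sFun hbr hi.le (by omega) hu hv₁
  rw [sub_add_eq_add_sub] at hxu
  rw [← add_sub_assoc] at hxv
  exact add_mem hxu hxv
termination_by (i + j + 2).toNat

variable [FiniteDimensional K L]

theorem eq_zero_of_mem_sFun_of_killingForm_eq_zero (hx : x ∈ g (-1))
    (hg : DirectSum.IsInternal g) (hbr : ∀ i j : ℤ, ∀ u ∈ g i, ∀ v ∈ g j, ⁅u, v⁆ ∈ g (i + j))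
    (hnd : ∀ u ∈ ⨆ i ≥ (-1 : ℤ), sFun g x i,
      (∀ v ∈ ⨆ i ≥ (-1 : ℤ), sFun g x i, killingForm K L u v = 0) → u = 0)
    {i : ℤ} (hi : 1 ≤ i) {u : L} (hu : u ∈ sFun g x i) (hux : killingForm K L u x = 0) :
    u = 0 := by
  have hperp : (⨆ j ≥ (-1 : ℤ), sFun g x j) ≤ LinearMap.ker (killingForm K L u) := by
    refine iSup₂_le fun j hj => ?_
    rcases hj.eq_or_lt with rfl | hj
    · rwa [sFun_neg_one, span_singleton_le_iff_mem, LinearMap.mem_ker]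
    · exact fun v hv => killingForm_eq_zero_of_mem_of_add_ne_zero hg hbr (by omega)
        (sFun_le hx i hu) (sFun_le hx j hv)
  exact hnd u (le_iSup₂ (f := fun j (_ : j ≥ (-1 : ℤ)) => sFun g x j) i (by omega) hu)
    fun v hv => hperp hv

theorem sFun_eq_bot_of_two_le (hx : x ∈ g (-1)) (hg : DirectSum.IsInternal g)
    (hbr : ∀ i j : ℤ, ∀ u ∈ g i, ∀ v ∈ g j, ⁅u, v⁆ ∈ g (i + j))
    (hnd : ∀ u ∈ ⨆ i ≥ (-1 : ℤ), sFun g x i,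
      (∀ v ∈ ⨆ i ≥ (-1 : ℤ), sFun g x i, killingForm K L u v = 0) → u = 0)
    {i : ℤ} (hi : 2 ≤ i) : sFun g x i = ⊥ :=
  eq_bot_iff.2 fun u hu => (mem_bot K).2 <|
    eq_zero_of_mem_sFun_of_killingForm_eq_zero hx hg hbr hnd (by omega) hu <|
      killingForm_eq_zero_of_mem_of_add_ne_zero hg hbr (by omega) (sFun_le hx i hu) hx

theorem sFun_one_eq_span_singleton (hx : x ∈ g (-1)) (hg : DirectSum.IsInternal g)
    (hbr : ∀ i j : ℤ, ∀ u ∈ g i, ∀ v ∈ g j, ⁅u, v⁆ ∈ g (i + j))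
    (hnd : ∀ u ∈ ⨆ i ≥ (-1 : ℤ), sFun g x i,
      (∀ v ∈ ⨆ i ≥ (-1 : ℤ), sFun g x i, killingForm K L u v = 0) → u = 0)
    {y : L} (hy : y ∈ sFun g x 1) (hxy : y = 0 → x = 0) : sFun g x 1 = K ∙ y := by
  have hker : ∀ u ∈ sFun g x 1, killingForm K L u x = 0 → u = 0 := fun u hu =>
    eq_zero_of_mem_sFun_of_killingForm_eq_zero hx hg hbr hnd le_rfl hu
  by_cases hyx : killingForm K L y x = 0
  · have hy₀ := hker y hy hyx
    have hbot : sFun g x 1 = ⊥ :=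
      eq_bot_iff.2 fun u hu => (mem_bot K).2 <| hker u hu (by simp [hxy hy₀])
    rw [hbot, hy₀, span_singleton_eq_bot.2 rfl]
  · exact eq_span_singleton_of_disjoint_ker (f := (killingForm K L).flip x)
      (disjoint_def.2 hker) hy hyx

end Grading

theorem stmt3_general {K L : Type*} [Field K] [CharZero K] [LieRing L] [LieAlgebra K L]
    [FiniteDimensional K L]
    (g : ℤ → Submodule K L)
    (hdsum : DirectSum.IsInternal g)
    (hbr : ∀ i j : ℤ, ∀ u ∈ g i, ∀ v ∈ g j, ⁅u, v⁆ ∈ g (i + j))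
    -- the graded `sl₂`-triple `(x, h, y)`:
    (x h y : L) (hx : x ∈ g (-1)) (hh : h ∈ g 0) (hy : y ∈ g 1)
    (hhx : ⁅h, x⁆ = (-2 : K) • x) (hyx : ⁅y, x⁆ = h) :
    h ∈ sFun g x 0 ∧ y ∈ sFun g x 1 ∧
    -- if moreover the restriction of the Killing form to `𝔰` is nondegenerate, then
    -- `𝔰_1 = K·y`, `𝔰_i = 0` for `i ≥ 2`, and `K·y` is an ideal of `𝔰⁽⁰⁾ = 𝔰₀ + 𝔰₁`:
    ((∀ u ∈ ⨆ i ≥ (-1 : ℤ), sFun g x i,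
        (∀ v ∈ ⨆ i ≥ (-1 : ℤ), sFun g x i, killingForm K L u v = 0) → u = 0) →
      sFun g x 1 = Submodule.span K {y} ∧
      (∀ i : ℤ, 2 ≤ i → sFun g x i = ⊥) ∧
      (∀ u ∈ sFun g x 0 ⊔ sFun g x 1, ∀ v ∈ Submodule.span K {y},
        ⁅u, v⁆ ∈ Submodule.span K {y})) := by
  have hh₀ : h ∈ sFun g x 0 := (mem_sFun_iff le_rfl).2 ⟨hh, by
    rw [← lie_skew, hhx, zero_sub, sFun_neg_one]
    exact neg_mem (smul_mem _ _ (mem_span_singleton_self x))⟩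
  have hy₁ : y ∈ sFun g x 1 := (mem_sFun_iff zero_le_one).2 ⟨hy, by
    rw [← lie_skew, hyx, sub_self]
    exact neg_mem hh₀⟩
  refine ⟨hh₀, hy₁, fun hnd => ?_⟩
  have hxy : y = 0 → x = 0 := fun hy₀ => by
    have h2x : (-2 : K) • x = 0 := by rw [← hhx, ← hyx, hy₀, zero_lie, zero_lie]
    simpa using h2x
  have hs₁ := sFun_one_eq_span_singleton hx hdsum hbr hnd hy₁ hxy
  have hs₂ : ∀ i : ℤ, 2 ≤ i → sFun g x i = ⊥ := fun i hi =>
    sFun_eq_bot_of_two_le hx hdsum hbr hnd hi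
  refine ⟨hs₁, hs₂, fun u hu v hv => ?_⟩
  rw [← hs₁] at hv ⊢
  obtain ⟨p, hp, q, hq, rfl⟩ := mem_sup.1 hu
  have hqv : ⁅q, v⁆ = 0 := by
    simpa [hs₂ 2 le_rfl] using lie_mem_sFun hbr (by norm_num) (by norm_num) hq hv
  rw [add_lie, hqv, add_zero, ← zero_add (1 : ℤ)]
  exact lie_mem_sFun hbr (by norm_num) (by norm_num) hp hv

theorem stmt3 {K L : Type*} [Field K] [CharZero K] [LieRing L] [LieAlgebra K L]
    [FiniteDimensional K L] [LieAlgebra.IsSemisimple K L]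
    (g : ℤ → Submodule K L)
    (hdsum : DirectSum.IsInternal g)
    (hfin : {i : ℤ | g i ≠ ⊥}.Finite)
    (hbr : ∀ i j : ℤ, ∀ u ∈ g i, ∀ v ∈ g j, ⁅u, v⁆ ∈ g (i + j))
    -- the graded `sl₂`-triple `(x, h, y)`:
    (x h y : L) (hx : x ∈ g (-1)) (hh : h ∈ g 0) (hy : y ∈ g 1)
    (hhx : ⁅h, x⁆ = (-2 : K) • x) (hhy : ⁅h, y⁆ = (2 : K) • y) (hyx : ⁅y, x⁆ = h) :
    h ∈ sFun g x 0 ∧ y ∈ sFun g x 1 ∧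
    -- if moreover the restriction of the Killing form to `𝔰` is nondegenerate, then
    -- `𝔰_1 = K·y`, `𝔰_i = 0` for `i ≥ 2`, and `K·y` is an ideal of `𝔰⁽⁰⁾ = 𝔰₀ + 𝔰₁`:
    ((∀ u ∈ ⨆ i ≥ (-1 : ℤ), sFun g x i,
        (∀ v ∈ ⨆ i ≥ (-1 : ℤ), sFun g x i, killingForm K L u v = 0) → u = 0) →
      sFun g x 1 = Submodule.span K {y} ∧
      (∀ i : ℤ, 2 ≤ i → sFun g x i = ⊥) ∧
      (∀ u ∈ sFun g x 0 ⊔ sFun g x 1, ∀ v ∈ Submodule.span K {y},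
        ⁅u, v⁆ ∈ Submodule.span K {y})) :=
  stmt3_general g hdsum hbr x h y hx hh hy hhx hyx
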